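/- arXiv:2102.08544 — 6 statements merged into one kernel-verified Lean document; each statement's English description precedes it below -/
import Mathlib

section
/- Let u and t^P be positive real numbers, let p = 1 − e^{-u t^P} and t^I = 1/u − (e^{-u t^P}/(1 − e^{-u t^P}))·t^P. Then the series ∑_{n=0}^∞ p^n (1−p) n t^I converges, and ∑_{n=0}^∞ p^n (1−p) n t^I + t^P = (e^{u t^P} − 1)/u. -/
/-!
The number of interruptions is geometric with mean `p / (1 - p) = e^{u tP} - 1`. Multiplying by
`tI`, the term `(e^{u tP} - 1) · e^{-u tP} / (1 - e^{-u tP}) · tP` collapses to `tP` and cancels the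
added `tP`, leaving `(e^{u tP} - 1) / u`.
-/

open Real Filter

theorem hasSum_geometric_pmf_mul_coe {𝕜 : Type*} [NormedField 𝕜] {p : 𝕜} (hp : ‖p‖ < 1) :
    HasSum (fun n : ℕ => p ^ n * (1 - p) * n) (p / (1 - p)) := by
  have hp1 : 1 - p ≠ 0 := by
    rw [sub_ne_zero]
    rintro rfl
    simp at hp
  have h := (hasSum_coe_mul_geometric_of_norm_lt_one hp).mul_right (1 - p)
  rw [sq, div_mul_eq_mul_div, mul_div_mul_right _ _ hp1] at h
  rwa [show (fun n : ℕ => p ^ n * (1 - p) * n) = fun n : ℕ => (n : 𝕜) * p ^ n * (1 - p) from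
    funext fun n => by ring]

theorem exp_sub_one_mul_exp_neg_div {x : ℝ} (hx : x ≠ 0) :
    (exp x - 1) * (exp (-x) / (1 - exp (-x))) = 1 := by
  have hne : 1 - exp (-x) ≠ 0 := by
    rw [sub_ne_zero, ne_comm, Ne, exp_eq_one_iff, neg_eq_zero]
    exact hx
  rw [mul_div_assoc', div_eq_one_iff_eq hne, sub_mul, ← exp_add, add_neg_cancel, exp_zero,
    one_mul]

theorem one_sub_exp_neg_div_exp_neg (x : ℝ) :
    (1 - exp (-x)) / (1 - (1 - exp (-x))) = exp x - 1 := by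
  rw [sub_sub_cancel, sub_div, div_self (exp_pos _).ne', exp_neg, one_div, inv_inv]

theorem statement4 (u tP : ℝ) (hu : 0 < u) (htP : 0 < tP)
    (p tI : ℝ) (hp : p = 1 - Real.exp (-u * tP))
    (htI : tI = 1 / u - (Real.exp (-u * tP) / (1 - Real.exp (-u * tP))) * tP) :
    Summable (fun n : ℕ => p ^ n * (1 - p) * (n : ℝ) * tI) ∧
      (∑' n : ℕ, p ^ n * (1 - p) * (n : ℝ) * tI) + tP = (Real.exp (u * tP) - 1) / u := by
  have hx : 0 < u * tP := mul_pos hu htP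
  have hp_norm : ‖p‖ < 1 := by
    have : exp (-(u * tP)) < 1 := exp_lt_one_iff.mpr (neg_lt_zero.mpr hx)
    rw [hp, neg_mul, norm_eq_abs, abs_lt]
    constructor <;> linarith [exp_pos (-(u * tP))]
  have hsum := (hasSum_geometric_pmf_mul_coe hp_norm).mul_right tI
  refine ⟨hsum.summable, ?_⟩
  have hmean : p / (1 - p) = exp (u * tP) - 1 := by
    rw [hp, neg_mul, one_sub_exp_neg_div_exp_neg]
  have hprod := exp_sub_one_mul_exp_neg_div hx.ne'
  rw [hsum.tsum_eq, hmean, htI, neg_mul]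
  linear_combination (-tP) * hprod
end

section
/- Let u, v, λ, t^P be positive real numbers. If real numbers p and q satisfy the system p = ∫_{t^P}^∞ u e^{-ut} dt + q·∫₀^{t^P} u e^{-ut} dt and q = p·∫₀^∞ (∫_s^∞ λ e^{-λt} dt)·v e^{-vs} ds, then p = (v+λ)e^{-u t^P}/(λ + v e^{-u t^P}) and q = v e^{-u t^P}/(λ + v e^{-u t^P}). -/
/-!
Every integral in the system is an elementary exponential integral: the first two are the
tail `e^{-u tP}` and the distribution function `1 - e^{-u tP}` of an `Exp(u)` variable, and the
double integral is `P(S < T) = v / (λ + v)` for independent `S ~ Exp(v)`, `T ~ Exp(λ)`.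
What remains is a linear system in `p` and `q`.
-/

open Real MeasureTheory Set

lemma integral_Ioi_mul_exp_neg_mul {b : ℝ} (hb : 0 < b) (c : ℝ) :
    ∫ x in Ioi c, b * exp (-b * x) = exp (-b * c) := by
  rw [integral_const_mul, integral_exp_mul_Ioi (neg_lt_zero.mpr hb)]
  field_simp

lemma integral_zero_mul_exp_neg_mul (b c : ℝ) :
    ∫ x in (0:ℝ)..c, b * exp (-b * x) = 1 - exp (-b * c) := by
  have h := intervalIntegral.mul_integral_comp_mul_left (a := 0) (b := c) (f := exp) (-b)
  rw [intervalIntegral.integral_const_mul]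
  simp only [mul_zero, integral_exp, exp_zero] at h
  linarith

lemma integral_Ioi_exp_tail_mul_exp_pdf {lam v : ℝ} (hlam : 0 < lam)
    (hlv : 0 < lam + v) :
    ∫ s in Ioi (0:ℝ), (∫ t in Ioi s, lam * exp (-lam * t)) * (v * exp (-v * s))
      = v / (lam + v) := by
  have hrate : ∀ s, (∫ t in Ioi s, lam * exp (-lam * t)) * (v * exp (-v * s))
      = v / (lam + v) * ((lam + v) * exp (-(lam + v) * s)) := by
    intro s
    rw [integral_Ioi_mul_exp_neg_mul hlam,
      show -(lam + v) * s = -lam * s + -v * s by ring, exp_add]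
    field_simp
  simp_rw [hrate]
  rw [integral_const_mul, integral_Ioi_mul_exp_neg_mul hlv]
  simp

lemma linear_system_solution {E r p q : ℝ} (hden : 1 - r * (1 - E) ≠ 0)
    (hp : p = E + q * (1 - E)) (hq : q = p * r) :
    p = E / (1 - r * (1 - E)) ∧ q = r * E / (1 - r * (1 - E)) := by
  have hpval : p = E / (1 - r * (1 - E)) := by
    rw [eq_div_iff hden]
    linear_combination hp + (1 - E) * hq
  refine ⟨hpval, ?_⟩
  rw [hq, hpval]
  ring

theorem statement6_general (u v lam tP : ℝ) (hu : 0 < u) (hv : 0 < v) (hlam : 0 < lam)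
    (p q : ℝ)
    (hp : p = (∫ t in Ioi tP, u * Real.exp (-u * t))
        + q * ∫ t in (0:ℝ)..tP, u * Real.exp (-u * t))
    (hq : q = p * ∫ s in Ioi (0:ℝ),
        (∫ t in Ioi s, lam * Real.exp (-lam * t)) * (v * Real.exp (-v * s))) :
    p = (v + lam) * Real.exp (-u * tP) / (lam + v * Real.exp (-u * tP)) ∧
      q = v * Real.exp (-u * tP) / (lam + v * Real.exp (-u * tP)) := by
  have hlv : 0 < lam + v := by positivity
  rw [integral_Ioi_mul_exp_neg_mul hu, integral_zero_mul_exp_neg_mul] at hp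
  rw [integral_Ioi_exp_tail_mul_exp_pdf hlam hlv] at hq
  set E := exp (-u * tP)
  have hden : 1 - v / (lam + v) * (1 - E) = (lam + v * E) / (lam + v) := by
    field_simp
    ring
  have hden_pos : 0 < lam + v * E := by positivity
  obtain ⟨hpval, hqval⟩ := linear_system_solution (by rw [hden]; positivity) hp hq
  rw [hden] at hpval hqval
  constructor
  · rw [hpval]; field_simp; ring
  · rw [hqval]; field_simp

theorem statement6 (u v lam tP : ℝ) (hu : 0 < u) (hv : 0 < v) (hlam : 0 < lam)
    (htP : 0 < tP) (p q : ℝ)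
    (hp : p = (∫ t in Ioi tP, u * Real.exp (-u * t))
        + q * ∫ t in (0:ℝ)..tP, u * Real.exp (-u * t))
    (hq : q = p * ∫ s in Ioi (0:ℝ),
        (∫ t in Ioi s, lam * Real.exp (-lam * t)) * (v * Real.exp (-v * s))) :
    p = (v + lam) * Real.exp (-u * tP) / (lam + v * Real.exp (-u * tP)) ∧
      q = v * Real.exp (-u * tP) / (lam + v * Real.exp (-u * tP)) :=
  statement6_general u v lam tP hu hv hlam p q hp hq
end

section
/- Fix positive real numbers k, λ and t^P, and for u > 0 set v = k·u, h = 1/u + 1/v, g = 1/λ + u/(v(u+v+λ)) − h, q = 1/(uv) − (v+λ)/(v(u+v+λ)²), and l = v/u + (u+v)/(u+v+λ). Define the average AoI Δ̄(u) = ( h²e^{2u t^P} + (h(g − t^P) − 1/(uv))e^{u t^P} + g/λ + q )/( h e^{u t^P} + g ) + ( (l + λ t^P)e^{u t^P} − l + u/(u+v+λ) )/( λ e^{u t^P} + v ). Then Δ̄(u) tends to +∞ as u tends to 0 from the right. -/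
/-!
Write `φ(u) = (e^{u tP} - 1)/u`, which tends to `tP` as `u → 0`. Substituting `e^{u tP} = 1 + u φ(u)`,
the first fraction of `Δ̄(u)` becomes `A(u, φ(u)) / (u · D(u, φ(u)))`, where `A` and `D` are rational
functions continuous at `(0, tP)` with `A(0, tP) = (tP + 1/λ)/k²` and `D(0, tP) = (1 + 1/k)(tP + 1/λ)`.
Hence the first fraction behaves like `1/(k(k+1)u) → +∞`, while the second fraction is continuous
at `u = 0`.
-/

open Real Filter Set

noncomputable def aoiBarU (k lam tP u : ℝ) : ℝ :=
  let v := k * u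
  let h := 1 / u + 1 / v
  let g := 1 / lam + u / (v * (u + v + lam)) - h
  let q := 1 / (u * v) - (v + lam) / (v * (u + v + lam) ^ 2)
  let l := v / u + (u + v) / (u + v + lam)
  (h ^ 2 * Real.exp (2 * u * tP) + (h * (g - tP) - 1 / (u * v)) * Real.exp (u * tP)
      + g / lam + q) / (h * Real.exp (u * tP) + g)
    + ((l + lam * tP) * Real.exp (u * tP) - l + u / (u + v + lam))
      / (lam * Real.exp (u * tP) + v)

open Topology

theorem tendsto_exp_mul_sub_one_div (t : ℝ) :
    Tendsto (fun u : ℝ => (exp (u * t) - 1) / u) (𝓝[≠] 0) (𝓝 t) := by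
  have h : HasDerivAt (fun u : ℝ => exp (u * t)) t 0 := by
    simpa using ((hasDerivAt_id (0 : ℝ)).mul_const t).exp
  refine (hasDerivAt_iff_tendsto_slope.mp h).congr fun u => ?_
  simp [slope_def_field]

section AoI

variable (k lam tP : ℝ)

/-- `u` times the numerator of the first fraction of `aoiBarU`, with `p` in place of
`(e^{u tP} - 1)/u`. -/
noncomputable def aoiFirstNum (u p : ℝ) : ℝ :=
  (1 + 1 / k) ^ 2 * (1 + u * p) * p
    + (1 + 1 / k) * (1 / lam + 1 / (k * (u + k * u + lam)) - tP) * (1 + u * p)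
    - p / k + u * (1 / lam + 1 / (k * (u + k * u + lam))) / lam - (1 + 1 / k) / lam
    - (k * u + lam) / (k * (u + k * u + lam) ^ 2)

/-- The denominator of the first fraction of `aoiBarU`, with `p` in place of `(e^{u tP} - 1)/u`. -/
noncomputable def aoiFirstDen (u p : ℝ) : ℝ :=
  (1 + 1 / k) * p + 1 / lam + 1 / (k * (u + k * u + lam))

noncomputable def aoiSecond (u : ℝ) : ℝ :=
  ((k + (u + k * u) / (u + k * u + lam) + lam * tP) * exp (u * tP)
      - (k + (u + k * u) / (u + k * u + lam)) + u / (u + k * u + lam))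
    / (lam * exp (u * tP) + k * u)

theorem aoiBarU_eq {u : ℝ} (hk : k ≠ 0) (hlam : lam ≠ 0) (hu : u ≠ 0) :
    aoiBarU k lam tP u =
      aoiFirstNum k lam tP u ((exp (u * tP) - 1) / u) / aoiFirstDen k lam u ((exp (u * tP) - 1) / u)
        * u⁻¹ + aoiSecond k lam tP u := by
  have hexp : exp (2 * u * tP) = exp (u * tP) ^ 2 := by rw [← exp_nat_mul]; ring_nf
  have hden : (1 / u + 1 / (k * u)) * exp (u * tP)
      + (1 / lam + u / (k * u * (u + k * u + lam)) - (1 / u + 1 / (k * u)))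
      = aoiFirstDen k lam u ((exp (u * tP) - 1) / u) := by
    unfold aoiFirstDen; field_simp; ring
  have hnum : (1 / u + 1 / (k * u)) ^ 2 * exp (u * tP) ^ 2
      + ((1 / u + 1 / (k * u)) * (1 / lam + u / (k * u * (u + k * u + lam))
          - (1 / u + 1 / (k * u)) - tP) - 1 / (u * (k * u))) * exp (u * tP)
      + (1 / lam + u / (k * u * (u + k * u + lam)) - (1 / u + 1 / (k * u))) / lam
      + (1 / (u * (k * u)) - (k * u + lam) / (k * u * (u + k * u + lam) ^ 2))
      = aoiFirstNum k lam tP u ((exp (u * tP) - 1) / u) / u := by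
    unfold aoiFirstNum; field_simp; ring
  simp only [aoiBarU]
  rw [hexp, hden, hnum, mul_div_cancel_right₀ k hu, div_right_comm, div_eq_mul_inv _ u]
  rfl

variable {k lam}

theorem aoiFirstNum_zero (hk : k ≠ 0) (hlam : lam ≠ 0) :
    aoiFirstNum k lam tP 0 tP = (tP + 1 / lam) / k ^ 2 := by
  simp only [aoiFirstNum, mul_zero, zero_mul, zero_add, add_zero]
  field_simp
  ring

theorem aoiFirstDen_zero (hk : k ≠ 0) (hlam : lam ≠ 0) :
    aoiFirstDen k lam 0 tP = (1 + 1 / k) * (tP + 1 / lam) := by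
  simp only [aoiFirstDen, mul_zero, zero_add]
  field_simp
  ring

theorem continuousAt_aoiFirstNum (hk : k ≠ 0) (hlam : lam ≠ 0) :
    ContinuousAt (fun x : ℝ × ℝ => aoiFirstNum k lam tP x.1 x.2) (0, tP) := by
  unfold aoiFirstNum
  fun_prop (disch := simp [hk, hlam])

theorem continuousAt_aoiFirstDen (hk : k ≠ 0) (hlam : lam ≠ 0) :
    ContinuousAt (fun x : ℝ × ℝ => aoiFirstDen k lam x.1 x.2) (0, tP) := by
  unfold aoiFirstDen
  fun_prop (disch := simp [hk, hlam])

theorem continuousAt_aoiSecond (hlam : lam ≠ 0) : ContinuousAt (aoiSecond k lam tP) 0 := by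
  unfold aoiSecond
  fun_prop (disch := simp [hlam])

theorem tendsto_aoiFirstNum_div_aoiFirstDen (hk : 0 < k) (hlam : 0 < lam) (htP : 0 < tP) :
    Tendsto (fun u => aoiFirstNum k lam tP u ((exp (u * tP) - 1) / u)
        / aoiFirstDen k lam u ((exp (u * tP) - 1) / u)) (𝓝[≠] 0) (𝓝 (1 / (k * (k + 1)))) := by
  have hpair : Tendsto (fun u : ℝ => (u, (exp (u * tP) - 1) / u)) (𝓝[≠] 0) (𝓝 (0, tP)) :=
    (tendsto_id.mono_left nhdsWithin_le_nhds).prodMk_nhds (tendsto_exp_mul_sub_one_div tP)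
  have hnum := (continuousAt_aoiFirstNum tP hk.ne' hlam.ne').tendsto.comp hpair
  have hden := (continuousAt_aoiFirstDen tP hk.ne' hlam.ne').tendsto.comp hpair
  rw [aoiFirstNum_zero tP hk.ne' hlam.ne'] at hnum
  rw [aoiFirstDen_zero tP hk.ne' hlam.ne'] at hden
  have hlim : (tP + 1 / lam) / k ^ 2 / ((1 + 1 / k) * (tP + 1 / lam)) = 1 / (k * (k + 1)) := by
    have : tP + 1 / lam ≠ 0 := by positivity
    field_simp
  have := hnum.div hden (by positivity)
  rwa [hlim] at this

end AoI

theorem statement7 (k lam tP : ℝ) (hk : 0 < k) (hlam : 0 < lam) (htP : 0 < tP) :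
    Tendsto (aoiBarU k lam tP) (nhdsWithin 0 (Ioi 0)) atTop := by
  have hfirst : Tendsto (fun u => aoiFirstNum k lam tP u ((exp (u * tP) - 1) / u)
      / aoiFirstDen k lam u ((exp (u * tP) - 1) / u) * u⁻¹) (𝓝[>] 0) atTop :=
    (tendsto_aoiFirstNum_div_aoiFirstDen tP hk hlam htP).mono_left
      (nhdsWithin_mono _ fun _ hu => ne_of_gt hu) |>.pos_mul_atTop (by positivity)
      tendsto_inv_nhdsGT_zero
  have hsecond : Tendsto (aoiSecond k lam tP) (𝓝[>] 0) (𝓝 (aoiSecond k lam tP 0)) :=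
    (continuousAt_aoiSecond tP hlam.ne').tendsto.mono_left nhdsWithin_le_nhds
  refine (hfirst.atTop_add hsecond).congr' ?_
  filter_upwards [self_mem_nhdsWithin] with u hu
  exact (aoiBarU_eq k lam tP hk.ne' hlam.ne' (ne_of_gt hu)).symm
end

section
/- Fix positive real numbers k, λ and t^P, and for u > 0 set v = k·u, h = 1/u + 1/v, g = 1/λ + u/(v(u+v+λ)) − h, q = 1/(uv) − (v+λ)/(v(u+v+λ)²), and l = v/u + (u+v)/(u+v+λ). Define the average AoI Δ̄(u) = ( h²e^{2u t^P} + (h(g − t^P) − 1/(uv))e^{u t^P} + g/λ + q )/( h e^{u t^P} + g ) + ( (l + λ t^P)e^{u t^P} − l + u/(u+v+λ) )/( λ e^{u t^P} + v ). Then Δ̄(u) tends to +∞ as u tends to +∞. -/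
open Real Filter Set

/-!
Dividing the numerator of the first fraction by its denominator `h e^{u t^P} + g` leaves the
quotient `h e^{u t^P}` and a remainder bounded below by `-t^P - 1/(u v h)` as soon as `g ≥ 0`
(which holds once `h ≤ 1/λ`) and `q ≥ 0`, while the second fraction is nonnegative. Since
`h ≥ 1/u`, this gives `Δ̄(u) ≥ e^{u t^P}/u - t^P - 1` for large `u`, and `e^{u t^P}/u → ∞`.
-/

lemma sub_le_quadratic_div_linear {h g s tP a b E : ℝ} (hh : 0 < h) (hg : 0 ≤ g) (hs : 0 ≤ s)
    (htP : 0 ≤ tP) (ha : 0 ≤ a) (hb : 0 ≤ b) (hE : 0 < E) :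
    h * E - tP - s / h ≤ (h ^ 2 * E ^ 2 + (h * (g - tP) - s) * E + a + b) / (h * E + g) := by
  have hD : 0 < h * E + g := by positivity
  have hrem : h ^ 2 * E ^ 2 + (h * (g - tP) - s) * E + a + b
      = (h * E - tP - s / h) * (h * E + g) + (tP * g + s / h * g + a + b) := by
    field_simp
    ring
  rw [le_div_iff₀ hD, hrem, le_add_iff_nonneg_right]
  positivity

lemma add_div_mul_sq_le_one_div_mul {u v lam : ℝ} (hu : 0 < u) (hv : 0 < v) (hlam : 0 ≤ lam) :
    (v + lam) / (v * (u + v + lam) ^ 2) ≤ 1 / (u * v) := by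
  rw [div_le_div_iff₀ (by positivity) (by positivity)]
  nlinarith [mul_pos hu hv, mul_nonneg hv.le hlam, sq_nonneg (v + lam)]

lemma exp_mul_div_sub_le_aoiBarU {k lam tP u : ℝ} (hk : 0 < k) (hlam : 0 < lam) (htP : 0 < tP)
    (hu : 1 ≤ u) (hlamu : 1 / u + 1 / (k * u) ≤ 1 / lam) :
    Real.exp (u * tP) / u - tP - 1 ≤ aoiBarU k lam tP u := by
  have hu0 : 0 < u := one_pos.trans_le hu
  have hv : 0 < k * u := mul_pos hk hu0
  have hE : 1 ≤ Real.exp (u * tP) := Real.one_le_exp (by positivity)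
  have hexp2 : Real.exp (2 * u * tP) = Real.exp (u * tP) ^ 2 := by
    rw [← Real.exp_nat_mul]; ring_nf
  have hh : 0 < 1 / u + 1 / (k * u) := by positivity
  have hg : 0 ≤ 1 / lam + u / (k * u * (u + k * u + lam)) - (1 / u + 1 / (k * u)) := by
    have : 0 ≤ u / (k * u * (u + k * u + lam)) := by positivity
    linarith
  have hq : 0 ≤ 1 / (u * (k * u)) - (k * u + lam) / (k * u * (u + k * u + lam) ^ 2) :=
    sub_nonneg.mpr (add_div_mul_sq_le_one_div_mul hu0 hv hlam.le)
  have hs : 1 / (u * (k * u)) / (1 / u + 1 / (k * u)) ≤ 1 := by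
    refine div_le_one_of_le₀ ?_ hh.le
    have : 1 / (u * (k * u)) ≤ 1 / (k * u) :=
      one_div_le_one_div_of_le hv (le_mul_of_one_le_left hv.le hu)
    linarith [one_div_pos.mpr hu0]
  have hEu : Real.exp (u * tP) / u ≤ (1 / u + 1 / (k * u)) * Real.exp (u * tP) := by
    rw [div_eq_mul_one_div, mul_comm]
    gcongr
    linarith [one_div_pos.mpr hv]
  have hfirst := sub_le_quadratic_div_linear (s := 1 / (u * (k * u))) hh hg (by positivity)
    htP.le (div_nonneg hg hlam.le) hq (one_pos.trans_le hE)
  have hsecond : 0 ≤ ((k * u / u + (u + k * u) / (u + k * u + lam) + lam * tP) * Real.exp (u * tP)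
      - (k * u / u + (u + k * u) / (u + k * u + lam)) + u / (u + k * u + lam))
      / (lam * Real.exp (u * tP) + k * u) := by
    have hl : 0 ≤ k * u / u + (u + k * u) / (u + k * u + lam) := by positivity
    have : 0 ≤ u / (u + k * u + lam) := by positivity
    apply div_nonneg _ (by positivity)
    nlinarith [mul_pos hlam htP]
  dsimp only [aoiBarU]
  rw [hexp2]
  linarith

theorem statement8 (k lam tP : ℝ) (hk : 0 < k) (hlam : 0 < lam) (htP : 0 < tP) :
    Tendsto (aoiBarU k lam tP) atTop atTop := by
  have hlower : Tendsto (fun u => Real.exp (tP * u) / u ^ (1 : ℝ) - tP - 1) atTop atTop :=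
    tendsto_atTop_add_const_right _ _ (tendsto_atTop_add_const_right _ _
      (tendsto_exp_mul_div_rpow_atTop 1 tP htP))
  refine tendsto_atTop_mono' _ ?_ hlower
  filter_upwards [eventually_ge_atTop 1, eventually_ge_atTop (lam * (1 + 1 / k))]
    with u hu hlamu
  rw [Real.rpow_one, mul_comm]
  refine exp_mul_div_sub_le_aoiBarU hk hlam htP hu ?_
  have hku : lam * (k + 1) ≤ k * u := by
    calc lam * (k + 1) = k * (lam * (1 + 1 / k)) := by field_simp
      _ ≤ k * u := by gcongr
  rw [div_add_div _ _ (by positivity) (by positivity), div_le_div_iff₀ (by positivity) hlam]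
  nlinarith
end

section
/- Let a and b be positive real numbers and define f(x) = (e^{ax} − 1)(e^{b/x} − 1) for x > 0. Then f is convex on the open interval (0, √(b/a)); indeed its second derivative is strictly positive on (0, √(b/a)). -/
open Real Set

/-!
With `u = a x` and `v = b / x`, a direct computation gives
`x² f''(x) = u² eᵘ (eᵛ - 1) + (v² + 2v)(eᵘ - 1) eᵛ - 2uv eᵘ eᵛ`,
and `x < √(b/a)` means exactly `u < v`. Multiplying by `(1 + u)(1 + v)` turns this expression into
`(1+u) u² eᵘ (eᵛ-1-v) + (1+v)(v²+2v) eᵛ (eᵘ-1-u) + uv eᵘ eᵛ ((v-u)² + (v-u))`,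
which is positive for `0 < u ≤ v` because `eᵗ > 1 + t` for `t ≠ 0`.
-/

noncomputable def transmissionEnergy (a b x : ℝ) : ℝ := (exp (a * x) - 1) * (exp (b / x) - 1)

noncomputable def secondDerivNumerator (u v : ℝ) : ℝ :=
  u ^ 2 * exp u * (exp v - 1) + (v ^ 2 + 2 * v) * (exp u - 1) * exp v - 2 * u * v * exp u * exp v

theorem secondDerivNumerator_pos {u v : ℝ} (hu : 0 < u) (huv : u ≤ v) :
    0 < secondDerivNumerator u v := by
  have hv : 0 < v := hu.trans_le huv
  have hE : u + 1 < exp u := add_one_lt_exp hu.ne'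
  have hF : v + 1 < exp v := add_one_lt_exp hv.ne'
  have hsum : 0 < (1 + u) * (1 + v) * secondDerivNumerator u v := by
    have hF' : 0 < exp v - 1 - v := by linarith
    have hE' : 0 < exp u - 1 - u := by linarith
    have hvu : 0 ≤ v - u := by linarith
    calc (0 : ℝ) < (1 + u) * (u ^ 2 * exp u) * (exp v - 1 - v)
          + (1 + v) * ((v ^ 2 + 2 * v) * exp v) * (exp u - 1 - u)
          + u * v * exp u * exp v * ((v - u) ^ 2 + (v - u)) := by positivity
      _ = (1 + u) * (1 + v) * secondDerivNumerator u v := by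
        unfold secondDerivNumerator; ring
  exact pos_of_mul_pos_right hsum (by positivity)

section

variable (a b : ℝ) {x : ℝ}

theorem hasDerivAt_transmissionEnergy (hx : x ≠ 0) :
    HasDerivAt (transmissionEnergy a b)
      (a * exp (a * x) * (exp (b / x) - 1) - b / x ^ 2 * (exp (a * x) - 1) * exp (b / x)) x := by
  have hu : HasDerivAt (fun y => a * y) a x := by simpa using (hasDerivAt_id x).const_mul a
  have hv : HasDerivAt (fun y => b / y) (-(b / x ^ 2)) x := by
    simpa [div_eq_mul_inv] using (hasDerivAt_inv hx).const_mul b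
  exact ((hu.exp.sub_const 1).mul (hv.exp.sub_const 1)).congr_deriv (by ring)

theorem iteratedDeriv_two_transmissionEnergy (hx : x ≠ 0) :
    iteratedDeriv 2 (transmissionEnergy a b) x = secondDerivNumerator (a * x) (b / x) / x ^ 2 := by
  have hu : HasDerivAt (fun y => a * y) a x := by simpa using (hasDerivAt_id x).const_mul a
  have hv : HasDerivAt (fun y => b / y) (-(b / x ^ 2)) x := by
    simpa [div_eq_mul_inv] using (hasDerivAt_inv hx).const_mul b
  have hw : HasDerivAt (fun y => b / y ^ 2) (-(b * (2 * x / (x ^ 2) ^ 2))) x := by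
    simpa [div_eq_mul_inv] using ((hasDerivAt_pow 2 x).inv (pow_ne_zero 2 hx)).const_mul b
  have hderiv : deriv (transmissionEnergy a b) =ᶠ[nhds x] fun y =>
      a * exp (a * y) * (exp (b / y) - 1) - b / y ^ 2 * (exp (a * y) - 1) * exp (b / y) := by
    filter_upwards [isOpen_ne.mem_nhds hx] with y hy
    exact (hasDerivAt_transmissionEnergy a b hy).deriv
  rw [iteratedDeriv_succ, iteratedDeriv_one, hderiv.deriv_eq]
  refine HasDerivAt.deriv (((hu.exp.const_mul a).mul (hv.exp.sub_const 1)).sub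
    ((hw.mul (hu.exp.sub_const 1)).mul hv.exp) |>.congr_deriv ?_)
  simp only [secondDerivNumerator, Pi.mul_apply]
  field_simp
  ring

theorem iteratedDeriv_two_transmissionEnergy_pos (ha : 0 < a) (hx : 0 < x) (hxab : a * x ^ 2 ≤ b) :
    0 < iteratedDeriv 2 (transmissionEnergy a b) x := by
  have huv : a * x ≤ b / x := by
    rw [le_div_iff₀ hx]
    linarith
  rw [iteratedDeriv_two_transmissionEnergy a b hx.ne']
  exact div_pos (secondDerivNumerator_pos (mul_pos ha hx) huv) (by positivity)

end

theorem statement13_general (a b : ℝ) (ha : 0 < a) :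
    ConvexOn ℝ (Ioo 0 (Real.sqrt (b / a)))
      (fun x : ℝ => (Real.exp (a * x) - 1) * (Real.exp (b / x) - 1)) ∧
    ∀ x ∈ Ioo (0:ℝ) (Real.sqrt (b / a)),
      0 < iteratedDeriv 2
        (fun x : ℝ => (Real.exp (a * x) - 1) * (Real.exp (b / x) - 1)) x := by
  have hpos : ∀ x ∈ Ioo (0:ℝ) (√(b / a)), 0 < iteratedDeriv 2 (transmissionEnergy a b) x := by
    intro x ⟨hx, hxs⟩
    have hx2 : x ^ 2 < b / a := (lt_sqrt hx.le).1 hxs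
    rw [lt_div_iff₀ ha] at hx2
    exact iteratedDeriv_two_transmissionEnergy_pos a b ha hx (by linarith)
  refine ⟨(strictConvexOn_of_deriv2_pos (convex_Ioo _ _) ?_ ?_).convexOn, hpos⟩
  · exact fun x hx =>
      (hasDerivAt_transmissionEnergy a b hx.1.ne').continuousAt.continuousWithinAt
  · intro x hx
    rw [← iteratedDeriv_eq_iterate]
    exact hpos x (by rwa [interior_Ioo] at hx)

theorem statement13 (a b : ℝ) (ha : 0 < a) (hb : 0 < b) :
    ConvexOn ℝ (Ioo 0 (Real.sqrt (b / a)))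
      (fun x : ℝ => (Real.exp (a * x) - 1) * (Real.exp (b / x) - 1)) ∧
    ∀ x ∈ Ioo (0:ℝ) (Real.sqrt (b / a)),
      0 < iteratedDeriv 2
        (fun x : ℝ => (Real.exp (a * x) - 1) * (Real.exp (b / x) - 1)) x :=
  statement13_general a b ha
end

section
/- Let u, v, λ be positive real numbers and set l = v/u + (u+v)/(u+v+λ). Define for t > 0 the function S̄(t) = ( (l + λt)e^{ut} − l + u/(u+v+λ) )/( λe^{ut} + v ). Then S̄ is strictly monotonically increasing on (0, +∞). -/
open Real Set

noncomputable def sBarT (u v lam : ℝ) (t : ℝ) : ℝ :=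
  let l := v / u + (u + v) / (u + v + lam)
  ((l + lam * t) * Real.exp (u * t) - l + u / (u + v + lam))
    / (lam * Real.exp (u * t) + v)

/-!
Writing `c = u / (u + v + λ)`, the quotient rule gives `S̄'(t)` the numerator
`e^{ut} (λ² e^{ut} + λ v + u v (l + λ t) + λ u (l - c))`, whose first term is positive and
whose others are nonnegative for `t ≥ 0` because `0 ≤ c ≤ l`.
-/

section ExpRatio

variable {u v lam l c : ℝ}

theorem hasDerivAt_expRatio (t : ℝ) (hden : lam * exp (u * t) + v ≠ 0) :
    HasDerivAt (fun t => ((l + lam * t) * exp (u * t) - l + c) / (lam * exp (u * t) + v))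
      (exp (u * t) * (lam ^ 2 * exp (u * t) + lam * v + u * v * (l + lam * t) + lam * u * (l - c))
        / (lam * exp (u * t) + v) ^ 2) t := by
  have hexp : HasDerivAt (fun t => exp (u * t)) (exp (u * t) * u) t := by
    simpa using ((hasDerivAt_id t).const_mul u).exp
  have hlin : HasDerivAt (fun t => l + lam * t) lam t := by
    simpa using ((hasDerivAt_id t).const_mul lam).const_add l
  have hnum : HasDerivAt (fun t => (l + lam * t) * exp (u * t) - l + c)
      (lam * exp (u * t) + (l + lam * t) * (exp (u * t) * u)) t :=
    ((hlin.mul hexp).sub_const l).add_const c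
  have hdenom := (hexp.const_mul lam).add_const v
  exact (hnum.div hdenom hden).congr_deriv (by ring)

theorem strictMonoOn_expRatio (hu : 0 ≤ u) (hv : 0 ≤ v) (hlam : 0 < lam) (hl : 0 ≤ l)
    (hcl : c ≤ l) :
    StrictMonoOn (fun t => ((l + lam * t) * exp (u * t) - l + c) / (lam * exp (u * t) + v))
      (Ici 0) := by
  have hden : ∀ t, lam * exp (u * t) + v ≠ 0 := fun t => by positivity
  refine strictMonoOn_of_deriv_pos (convex_Ici 0)
    (fun t _ => (hasDerivAt_expRatio t (hden t)).continuousAt.continuousWithinAt) ?_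
  intro t ht
  rw [interior_Ici, mem_Ioi] at ht
  rw [(hasDerivAt_expRatio t (hden t)).deriv]
  have hlt : 0 ≤ l + lam * t := by positivity
  have hlc : 0 ≤ l - c := sub_nonneg.mpr hcl
  positivity

end ExpRatio

theorem statement17 (u v lam : ℝ) (hu : 0 < u) (hv : 0 < v) (hlam : 0 < lam) :
    StrictMonoOn (sBarT u v lam) (Ioi 0) := by
  have hs : 0 < u + v + lam := by positivity
  have hcl : u / (u + v + lam) ≤ v / u + (u + v) / (u + v + lam) := by
    have : u / (u + v + lam) ≤ (u + v) / (u + v + lam) := by gcongr; linarith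
    linarith [div_nonneg hv.le hu.le]
  have hl : 0 ≤ v / u + (u + v) / (u + v + lam) := (div_nonneg hu.le hs.le).trans hcl
  exact (strictMonoOn_expRatio hu.le hv.le hlam hl hcl).mono Ioi_subset_Ici_self
end
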